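/- Let φ(u) = (2π)^{-1/2} exp(−u²/2) denote the standard normal density on ℝ. For t > 0 and α ∈ ℝ, define the midpoint-quantized function ψ_{t,α}(u) = φ( α + (⌊(u − α)/t⌋ + 1/2)·t ) and the normalizing constant c_{t,α} = ∫_ℝ ψ_{t,α}(u) du, and set φ_{t,α} = ψ_{t,α}/c_{t,α}. Then the relative entropy of the quantized Gaussian from the Gaussian vanishes uniformly in the offset: sup_{α∈[0,t]} ∫_ℝ φ_{t,α}(u) · log( φ_{t,α}(u) / φ(u) ) du → 0 as t → 0⁺. -/

import Mathlib

open scoped ENNReal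
open MeasureTheory

/-- The standard normal density on `ℝ`. -/
noncomputable def stdGauss (u : ℝ) : ℝ :=
  (2 * Real.pi) ^ (-(1 : ℝ) / 2) * Real.exp (-u ^ 2 / 2)

/-- The midpoint quantization of the standard normal density with span `t` and offset `α`. -/
noncomputable def quantGaussUnnormalized (t α u : ℝ) : ℝ :=
  stdGauss (α + ((⌊(u - α) / t⌋ : ℝ) + 1 / 2) * t)

/-- The normalizing constant of the quantized standard normal density. -/
noncomputable def quantGaussConst (t α : ℝ) : ℝ≥0∞ :=
  ∫⁻ u, ENNReal.ofReal (quantGaussUnnormalized t α u)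

/-- The normalized quantized standard normal density. -/
noncomputable def quantGauss (t α u : ℝ) : ℝ :=
  quantGaussUnnormalized t α u / (quantGaussConst t α).toReal

/-! With `m(u)` the midpoint of the cell containing `u`, the quantized density is `φ · exp r` for
`r(u) = (u² - m(u)²)/2`, and `|m(u) - u| ≤ t/2` gives `|r(u)| ≤ t(|u| + t/4)/2`.
For any probability density `φ` and tilt `ψ = φ · exp r` with `c = ∫ ψ`, the relative entropy of
`ψ / c` from `φ` is `(∫ ψ r)/c - log c`, and both `|∫ ψ r|` and `|c - 1|` are at most
`∫ φ |r| e^{|r|}`. For the Gaussian this is `O(t)` uniformly in `α`, since `φ(u) e^{|u|}` is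
dominated by a multiple of `exp(-u²/8)`. -/

open Real

theorem Real.abs_exp_sub_one_le_abs_mul_exp_abs (x : ℝ) : |exp x - 1| ≤ |x| * exp |x| := by
  rcases le_total 0 x with hx | hx
  · rw [abs_of_nonneg hx, abs_of_nonneg (by simpa using exp_le_exp.mpr hx)]
    have := add_one_le_exp (-x)
    rw [exp_neg] at this
    have hpos := exp_pos x
    nlinarith [mul_le_mul_of_nonneg_left this hpos.le, mul_inv_cancel₀ hpos.ne']
  · rw [abs_of_nonpos hx, abs_of_nonpos (by simpa using exp_le_exp.mpr hx)]
    nlinarith [add_one_le_exp x, one_le_exp (neg_nonneg.mpr hx)]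

theorem Real.abs_log_le_two_mul_of_abs_sub_one_le {c η : ℝ} (hc : |c - 1| ≤ η)
    (hη : η ≤ 1 / 2) : |log c| ≤ 2 * η := by
  obtain ⟨hlo, hhi⟩ := abs_le.mp hc
  have hc0 : 0 < c := by linarith
  have hinv : 1 - c⁻¹ = (c - 1) / c := by field_simp
  have hlower : -(2 * η) ≤ (c - 1) / c := by
    rw [le_div_iff₀ hc0]; nlinarith
  refine abs_le.mpr ⟨?_, ?_⟩
  · linarith [one_sub_inv_le_log_of_pos hc0]
  · linarith [log_le_sub_one_of_pos hc0]

theorem Real.abs_mul_exp_mul_le {a : ℝ} (ha : 0 ≤ a) (x : ℝ) :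
    |a * exp x * x| ≤ a * (|x| * exp |x|) := by
  rw [abs_mul, abs_mul, abs_of_nonneg ha, abs_exp, mul_assoc, mul_comm (exp x)]
  gcongr
  exact le_abs_self x

section Tilt

variable {X : Type*} [MeasurableSpace X] {μ : Measure X} {φ r : X → ℝ}

theorem integrable_mul_exp (hφ0 : ∀ x, 0 ≤ φ x) (hφ : Integrable φ μ)
    (hr : AEStronglyMeasurable r μ) (hD : Integrable (fun x ↦ φ x * (|r x| * exp |r x|)) μ) :
    Integrable (fun x ↦ φ x * exp (r x)) μ := by
  refine (hφ.add hD).mono' (hφ.1.mul (continuous_exp.comp_aestronglyMeasurable hr)) ?_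
  refine Filter.Eventually.of_forall fun x ↦ ?_
  have h := (abs_le.mp (abs_exp_sub_one_le_abs_mul_exp_abs (r x))).2
  rw [Real.norm_eq_abs, abs_of_nonneg (mul_nonneg (hφ0 x) (exp_pos _).le), Pi.add_apply]
  nlinarith [mul_le_mul_of_nonneg_left h (hφ0 x)]

theorem abs_integral_mul_exp_sub_integral_le (hφ0 : ∀ x, 0 ≤ φ x) (hφ : Integrable φ μ)
    (hr : AEStronglyMeasurable r μ) (hD : Integrable (fun x ↦ φ x * (|r x| * exp |r x|)) μ) :
    |∫ x, φ x * exp (r x) ∂μ - ∫ x, φ x ∂μ| ≤ ∫ x, φ x * (|r x| * exp |r x|) ∂μ := by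
  rw [← integral_sub (integrable_mul_exp hφ0 hφ hr hD) hφ, ← Real.norm_eq_abs]
  refine norm_integral_le_of_norm_le hD (Filter.Eventually.of_forall fun x ↦ ?_)
  rw [Real.norm_eq_abs, ← mul_sub_one, abs_mul, abs_of_nonneg (hφ0 x)]
  exact mul_le_mul_of_nonneg_left (abs_exp_sub_one_le_abs_mul_exp_abs _) (hφ0 x)

theorem integrable_mul_exp_mul (hφ0 : ∀ x, 0 ≤ φ x) (hφ : Integrable φ μ)
    (hr : AEStronglyMeasurable r μ) (hD : Integrable (fun x ↦ φ x * (|r x| * exp |r x|)) μ) :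
    Integrable (fun x ↦ φ x * exp (r x) * r x) μ := by
  refine hD.mono' ((integrable_mul_exp hφ0 hφ hr hD).1.mul hr) ?_
  exact Filter.Eventually.of_forall fun x ↦ abs_mul_exp_mul_le (hφ0 x) (r x)

theorem abs_integral_mul_exp_mul_le (hφ0 : ∀ x, 0 ≤ φ x)
    (hD : Integrable (fun x ↦ φ x * (|r x| * exp |r x|)) μ) :
    |∫ x, φ x * exp (r x) * r x ∂μ| ≤ ∫ x, φ x * (|r x| * exp |r x|) ∂μ :=
  norm_integral_le_of_norm_le (f := fun x ↦ φ x * exp (r x) * r x) hD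
    (Filter.Eventually.of_forall fun x ↦ abs_mul_exp_mul_le (hφ0 x) (r x))

theorem abs_integral_tilt_mul_log_le (hφ0 : ∀ x, 0 ≤ φ x) (hφ : Integrable φ μ)
    (hφ1 : ∫ x, φ x ∂μ = 1) (hr : AEStronglyMeasurable r μ)
    (hD : Integrable (fun x ↦ φ x * (|r x| * exp |r x|)) μ) {η : ℝ}
    (hDη : ∫ x, φ x * (|r x| * exp |r x|) ∂μ ≤ η) (hη : η ≤ 1 / 2) :
    |∫ x, φ x * exp (r x) / (∫ y, φ y * exp (r y) ∂μ) *
        log (φ x * exp (r x) / (∫ y, φ y * exp (r y) ∂μ) / φ x) ∂μ| ≤ 4 * η := by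
  set c := ∫ y, φ y * exp (r y) ∂μ
  have hc : |c - 1| ≤ η := hφ1 ▸ (abs_integral_mul_exp_sub_integral_le hφ0 hφ hr hD).trans hDη
  have hc0 : 1 / 2 ≤ c := by linarith [(abs_le.mp hc).1]
  have hA := (abs_integral_mul_exp_mul_le hφ0 hD).trans hDη
  have hlog : |log c| ≤ 2 * η := abs_log_le_two_mul_of_abs_sub_one_le hc hη
  have hpt : ∀ x, φ x * exp (r x) / c * log (φ x * exp (r x) / c / φ x) =
      φ x * exp (r x) * r x / c - φ x * exp (r x) * (log c / c) := by
    intro x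
    rcases (hφ0 x).eq_or_lt with hφx | hφx
    · simp [← hφx]
    have : φ x * exp (r x) / c / φ x = exp (r x) / c := by field_simp
    rw [this, log_div (exp_pos _).ne' (by positivity), log_exp]
    ring
  rw [integral_congr_ae (Filter.Eventually.of_forall hpt),
    integral_sub ((integrable_mul_exp_mul hφ0 hφ hr hD).div_const c)
      ((integrable_mul_exp hφ0 hφ hr hD).mul_const _), integral_div, integral_mul_const,
    mul_div_cancel₀ _ (by positivity)]
  set A := ∫ x, φ x * exp (r x) * r x ∂μ
  calc |A / c - log c| ≤ |A| / c + |log c| := by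
        simpa only [abs_div, abs_of_pos (by positivity : 0 < c)] using abs_sub (A / c) (log c)
    _ ≤ 2 * η + 2 * η := by
        gcongr
        rw [div_le_iff₀ (by positivity)]
        nlinarith [abs_nonneg A]
    _ = 4 * η := by ring

end Tilt

theorem stdGauss_eq_gaussianPDFReal : stdGauss = ProbabilityTheory.gaussianPDFReal 0 1 := by
  ext u
  simp only [stdGauss, ProbabilityTheory.gaussianPDFReal, sqrt_eq_rpow]
  norm_num [rpow_neg (by positivity : (0 : ℝ) ≤ 2 * π)]

theorem stdGauss_le (u : ℝ) : stdGauss u ≤ exp (-u ^ 2 / 2) := by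
  have : (2 * π) ^ (-(1 : ℝ) / 2) ≤ 1 :=
    rpow_le_one_of_one_le_of_nonpos (by linarith [pi_gt_three]) (by norm_num)
  unfold stdGauss
  nlinarith [exp_pos (-u ^ 2 / 2)]

theorem stdGauss_nonneg (u : ℝ) : 0 ≤ stdGauss u := by
  rw [stdGauss_eq_gaussianPDFReal]; exact ProbabilityTheory.gaussianPDFReal_nonneg 0 1 u

theorem integrable_stdGauss : Integrable stdGauss := by
  rw [stdGauss_eq_gaussianPDFReal]; exact ProbabilityTheory.integrable_gaussianPDFReal 0 1

theorem integral_stdGauss : ∫ u, stdGauss u = 1 := by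
  rw [stdGauss_eq_gaussianPDFReal]
  exact ProbabilityTheory.integral_gaussianPDFReal_eq_one 0 one_ne_zero

theorem continuous_stdGauss : Continuous stdGauss := by
  unfold stdGauss; fun_prop

noncomputable def quantCellMid (t α u : ℝ) : ℝ := α + ((⌊(u - α) / t⌋ : ℝ) + 1 / 2) * t

noncomputable def quantLogRatio (t α u : ℝ) : ℝ := (u ^ 2 - quantCellMid t α u ^ 2) / 2

theorem abs_quantCellMid_sub_le {t : ℝ} (ht : 0 < t) (α u : ℝ) :
    |quantCellMid t α u - u| ≤ t / 2 := by
  have hfloor := Int.floor_le ((u - α) / t)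
  have hfloor' := Int.lt_floor_add_one ((u - α) / t)
  have hu : u = α + (u - α) / t * t := by field_simp; ring
  rw [quantCellMid, abs_le]
  constructor <;> nth_rewrite 2 [hu] <;> nlinarith

theorem abs_quantLogRatio_le {t : ℝ} (ht : 0 < t) (α u : ℝ) :
    |quantLogRatio t α u| ≤ t * (|u| + t / 4) / 2 := by
  have hmid := abs_quantCellMid_sub_le ht α u
  have hsum : |u + quantCellMid t α u| ≤ 2 * (|u| + t / 4) := by
    calc |u + quantCellMid t α u| = |2 * u + (quantCellMid t α u - u)| := by ring_nf
      _ ≤ |2 * u| + |quantCellMid t α u - u| := abs_add_le _ _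
      _ ≤ 2 * (|u| + t / 4) := by rw [abs_mul, abs_two]; linarith
  calc |quantLogRatio t α u| = |quantCellMid t α u - u| * |u + quantCellMid t α u| / 2 := by
        rw [quantLogRatio, abs_div, abs_two, ← abs_mul, ← abs_neg]; ring_nf
    _ ≤ t / 2 * (2 * (|u| + t / 4)) / 2 := by gcongr
    _ = t * (|u| + t / 4) / 2 := by ring

theorem measurable_quantCellMid (t α : ℝ) : Measurable (quantCellMid t α) := by
  unfold quantCellMid
  fun_prop

theorem measurable_quantLogRatio (t α : ℝ) : Measurable (quantLogRatio t α) := by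
  have := measurable_quantCellMid t α
  unfold quantLogRatio
  fun_prop

theorem quantGaussUnnormalized_eq (t α u : ℝ) :
    quantGaussUnnormalized t α u = stdGauss u * exp (quantLogRatio t α u) := by
  rw [quantGaussUnnormalized, ← quantCellMid, stdGauss, stdGauss, mul_assoc, ← exp_add,
    quantLogRatio]
  ring_nf

theorem stdGauss_mul_abs_quantLogRatio_le {t : ℝ} (ht : 0 < t) (ht1 : t ≤ 1) (α u : ℝ) :
    stdGauss u * (|quantLogRatio t α u| * exp |quantLogRatio t α u|) ≤
      t * (exp 1 * exp (-(1 / 8) * u ^ 2)) := by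
  set B := (|u| + 1 / 4) / 2 with hBdef
  have hB : 0 ≤ B := by positivity
  have hr : |quantLogRatio t α u| ≤ t * B := by
    have : t / 4 ≤ 1 / 4 := by linarith
    calc _ ≤ t * (|u| + t / 4) / 2 := abs_quantLogRatio_le ht α u
      _ ≤ t * B := by rw [mul_div_assoc]; gcongr; linarith
  calc stdGauss u * (|quantLogRatio t α u| * exp |quantLogRatio t α u|)
      ≤ exp (-u ^ 2 / 2) * (t * B * exp B) := by
        gcongr
        · exact stdGauss_le u
        · nlinarith
    _ ≤ exp (-u ^ 2 / 2) * (t * exp B * exp B) := by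
        gcongr
        linarith [add_one_le_exp B]
    _ = t * exp (-u ^ 2 / 2 + B + B) := by rw [exp_add, exp_add]; ring
    _ ≤ t * exp (1 + -(1 / 8) * u ^ 2) := by
        gcongr t * exp ?_
        -- `3u²/8 - |u| + 3/4` has negative discriminant
        nlinarith [sq_abs u, sq_nonneg (|u| - 4 / 3), hBdef]
    _ = t * (exp 1 * exp (-(1 / 8) * u ^ 2)) := by rw [exp_add]

theorem integrable_stdGauss_mul_abs_quantLogRatio {t : ℝ} (ht : 0 < t) (ht1 : t ≤ 1) (α : ℝ) :
    Integrable (fun u ↦ stdGauss u * (|quantLogRatio t α u| * exp |quantLogRatio t α u|)) := by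
  have hg := (integrable_exp_neg_mul_sq (by norm_num : (0 : ℝ) < 1 / 8)).const_mul (exp 1)
  refine (hg.const_mul t).mono' ?_ (Filter.Eventually.of_forall fun u ↦ ?_)
  · have := measurable_quantLogRatio t α
    exact (continuous_stdGauss.measurable.mul (by fun_prop)).aestronglyMeasurable
  · rw [Real.norm_eq_abs, abs_of_nonneg (by have := stdGauss_nonneg u; positivity)]
    exact stdGauss_mul_abs_quantLogRatio_le ht ht1 α u

theorem integral_stdGauss_mul_abs_quantLogRatio_le {t : ℝ} (ht : 0 < t) (ht1 : t ≤ 1) (α : ℝ) :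
    ∫ u, stdGauss u * (|quantLogRatio t α u| * exp |quantLogRatio t α u|) ≤
      t * (exp 1 * √(π / (1 / 8))) := by
  calc _ ≤ ∫ u, t * (exp 1 * exp (-(1 / 8) * u ^ 2)) :=
        integral_mono (integrable_stdGauss_mul_abs_quantLogRatio ht ht1 α)
          (((integrable_exp_neg_mul_sq (by norm_num)).const_mul _).const_mul _)
          (stdGauss_mul_abs_quantLogRatio_le ht ht1 α)
    _ = t * (exp 1 * √(π / (1 / 8))) := by
        rw [integral_const_mul, integral_const_mul, integral_gaussian]

theorem quantGaussConst_toReal (t α : ℝ) :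
    (quantGaussConst t α).toReal = ∫ u, quantGaussUnnormalized t α u := by
  refine (integral_eq_lintegral_of_nonneg_ae (Filter.Eventually.of_forall fun u ↦ ?_) ?_).symm
  · exact stdGauss_nonneg _
  · exact (continuous_stdGauss.measurable.comp (measurable_quantCellMid t α)).aestronglyMeasurable

theorem abs_integral_quantGauss_mul_log_le {t : ℝ} (ht : 0 < t) (ht1 : t ≤ 1) (α : ℝ)
    (hsmall : t * (exp 1 * √(π / (1 / 8))) ≤ 1 / 2) :
    |∫ u, quantGauss t α u * log (quantGauss t α u / stdGauss u)| ≤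
      4 * (t * (exp 1 * √(π / (1 / 8)))) := by
  simp only [quantGauss, quantGaussConst_toReal, quantGaussUnnormalized_eq]
  exact abs_integral_tilt_mul_log_le stdGauss_nonneg integrable_stdGauss integral_stdGauss
    (measurable_quantLogRatio t α).aestronglyMeasurable
    (integrable_stdGauss_mul_abs_quantLogRatio ht ht1 α)
    (integral_stdGauss_mul_abs_quantLogRatio_le ht ht1 α) hsmall

theorem quantized_gaussian_relative_entropy_convergence :
    ∀ ε : ℝ, 0 < ε → ∃ δ : ℝ, 0 < δ ∧ ∀ t : ℝ, 0 < t → t < δ →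
      ∀ α ∈ Set.Icc (0 : ℝ) t,
        |∫ u, quantGauss t α u * Real.log (quantGauss t α u / stdGauss u)| < ε := by
  intro ε hε
  set C := exp 1 * √(π / (1 / 8))
  have hC : 0 < C := by positivity
  refine ⟨min 1 (min (1 / (2 * C)) (ε / (4 * C))), by positivity, fun t ht htδ α _ ↦ ?_⟩
  simp only [lt_min_iff, lt_div_iff₀ (by positivity : 0 < 2 * C),
    lt_div_iff₀ (by positivity : 0 < 4 * C)] at htδ
  calc _ ≤ 4 * (t * C) := abs_integral_quantGauss_mul_log_le ht htδ.1.le α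
        (show t * C ≤ 1 / 2 by linarith)
    _ < ε := by linarith
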